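/- Let A be a monoid, ρ : A → A multiplicative, and g an element of a group acting on A by conjugation with a unit U(g); write α_g = Ad U(g). Suppose V is a unit of A with V·ρ(a)·V⁻¹ = ρ(α_g(a)) for all a ∈ A, and set z := V·U(g)⁻¹. If x ∈ A satisfies ρ(x) = x and ρ(α_{g⁻¹}(x)) = α_{g⁻¹}(x), then z·x·z⁻¹ = x. -/
import Mathlib

/-- The localization argument: the transporter z = V·U(g)⁻¹ of an endomorphism ρ
commutes with every x fixed by both ρ and ρ ∘ α_{g⁻¹}. -/
theorem transporter_commutes_localized {A : Type*} [Monoid A]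
    (ρ : A →* A) (Ug V : Aˣ)
    (hV : ∀ a : A, (V : A) * ρ a * ((V⁻¹ : Aˣ) : A) =
      ρ ((Ug : A) * a * ((Ug⁻¹ : Aˣ) : A)))
    (x : A) (hx1 : ρ x = x)
    (hx2 : ρ (((Ug⁻¹ : Aˣ) : A) * x * (Ug : A)) = ((Ug⁻¹ : Aˣ) : A) * x * (Ug : A)) :
    ((V : A) * ((Ug⁻¹ : Aˣ) : A)) * x * ((Ug : A) * ((V⁻¹ : Aˣ) : A)) = x := by
  have h := hV (((Ug⁻¹ : Aˣ) : A) * x * (Ug : A))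
  rw [hx2] at h
  have h2 : (Ug : A) * (((Ug⁻¹ : Aˣ) : A) * x * (Ug : A)) * ((Ug⁻¹ : Aˣ) : A) = x := by
    rw [← mul_assoc, ← mul_assoc, Ug.mul_inv, one_mul, mul_assoc, Ug.mul_inv, mul_one]
  rw [h2, hx1] at h
  calc ((V : A) * ((Ug⁻¹ : Aˣ) : A)) * x * ((Ug : A) * ((V⁻¹ : Aˣ) : A))
      = (V : A) * (((Ug⁻¹ : Aˣ) : A) * x * (Ug : A)) * ((V⁻¹ : Aˣ) : A) := by
        simp [mul_assoc]
    _ = x := h
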